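/- Let A be a finite family of sets and B a finite set with ⋃A ⊆ B, let a be a positive integer, and suppose that for every nonempty proper subfamily S ⊊ A, the union ⋃_{q ∈ S} q̂ (where q̂ ⊇ q is an 'enlargement' of q) contains at least a·|S| elements of B, and |B| = a·|A|. Then in the bipartite graph Γ with parts A and B where q ∈ A is adjacent to v ∈ B iff v ∈ q̂, the vertices can be partitioned into |A| disjoint a-stars with centers in A. -/

import Mathlib

/-!
Split every centre `q ∈ A` into `a` copies. An `a`-star decomposition is then a matching of `B`
into `A × Fin a`, and Hall's theorem provides one as soon as every `s ⊆ B` has at least `|s|/a`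
neighbours. If `Q` is the neighbourhood of `s`, the enlargements of the centres outside `Q` miss
`s`, so the Hall hypothesis for `Qᶜ` gives `a·|Qᶜ| + |s| ≤ |B| = a·|A|`, that is,
`|s| ≤ a·|Q|`.
Since `|B| = a·|A|` and no fibre exceeds `a`, every fibre has exactly `a` elements.
-/

open Finset

theorem Fintype.exists_fiber_card_le_of_card_le_mul_filter_rel {α β : Type*} [Fintype α]
    [Fintype β] [DecidableEq β] (r : α → β → Prop) [DecidableRel r] (k : ℕ)
    (hr : ∀ s : Finset α, #s ≤ k * #{b | ∃ x ∈ s, r x b}) :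
    ∃ f : α → β, (∀ x, r x (f x)) ∧ ∀ b, #{x | f x = b} ≤ k := by
  have hall : ∀ s : Finset α, #s ≤ #{p : β × Fin k | ∃ x ∈ s, r x p.1} := by
    intro s
    have hprod : ({p : β × Fin k | ∃ x ∈ s, r x p.1} : Finset _) =
        ({b | ∃ x ∈ s, r x b} : Finset β) ×ˢ univ := by
      ext; simp
    rw [hprod, card_product, card_univ, Fintype.card_fin, mul_comm]
    exact hr s
  obtain ⟨g, hg_inj, hg⟩ := (Fintype.all_card_le_filter_rel_iff_exists_injective _).1 hall
  refine ⟨fun x => (g x).1, hg, fun b => ?_⟩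
  calc #{x | (g x).1 = b} ≤ #(univ : Finset (Fin k)) :=
        card_le_card_of_injOn (fun x => (g x).2) (fun _ _ => mem_coe.2 (mem_univ _))
          fun x hx y hy hxy => hg_inj <| Prod.ext
            ((mem_filter.1 hx).2.trans (mem_filter.1 hy).2.symm) hxy
    _ = k := by rw [card_univ, Fintype.card_fin]

theorem Fintype.fiber_card_eq_of_fiber_card_le {α β : Type*} [Fintype α] [Fintype β]
    [DecidableEq β] {f : α → β} {k : ℕ} (hf : ∀ b, #{x | f x = b} ≤ k)
    (hcard : Fintype.card α = k * Fintype.card β) (b : β) : #{x | f x = b} = k := by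
  have hsum : ∑ b, #{x | f x = b} = ∑ _b : β, k := by
    rw [← card_eq_sum_card_fiberwise fun x _ => mem_univ (f x), card_univ, hcard, sum_const,
      card_univ, smul_eq_mul, mul_comm]
  exact (sum_eq_sum_iff_of_le fun b _ => hf b).1 hsum b (mem_univ b)

theorem card_le_mul_card_filter_mem_of_hall {A B : Type*} [Fintype A] [Fintype B]
    [DecidableEq A] [DecidableEq B] (hat : A → Finset B) (a : ℕ)
    (hcover : ∀ b : B, ∃ q : A, b ∈ hat q)
    (hHall : ∀ S : Finset A, S.Nonempty → S ≠ univ → a * #S ≤ #(S.biUnion hat))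
    (hcard : Fintype.card B = a * Fintype.card A) (s : Finset B) :
    #s ≤ a * #{q | ∃ b ∈ s, b ∈ hat q} := by
  set Q : Finset A := {q | ∃ b ∈ s, b ∈ hat q}
  obtain rfl | ⟨b, hb⟩ := s.eq_empty_or_nonempty
  · simp
  by_cases hQ : Q = univ
  · rw [hQ, card_univ, ← hcard]
    exact card_le_univ s
  have hQc_nonempty : Qᶜ.Nonempty := nonempty_iff_ne_empty.2 (by rwa [Ne, compl_eq_empty_iff])
  have hQc_ne_univ : Qᶜ ≠ univ := by
    obtain ⟨q, hq⟩ := hcover b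
    rw [Ne, compl_eq_univ_iff]
    exact ne_empty_of_mem (s := Q) (mem_filter.2 ⟨mem_univ q, b, hb, hq⟩)
  have hdisj : Disjoint (Qᶜ.biUnion hat) s := by
    refine disjoint_left.2 fun c hc hcs => ?_
    obtain ⟨q, hqQ, hcq⟩ := mem_biUnion.1 hc
    exact mem_compl.1 hqQ (mem_filter.2 ⟨mem_univ q, c, hcs, hcq⟩)
  have key : a * #Qᶜ + #s ≤ a * #Qᶜ + a * #Q :=
    calc a * #Qᶜ + #s ≤ #(Qᶜ.biUnion hat) + #s :=
          Nat.add_le_add_right (hHall Qᶜ hQc_nonempty hQc_ne_univ) _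
      _ = #(Qᶜ.biUnion hat ∪ s) := (card_union_of_disjoint hdisj).symm
      _ ≤ Fintype.card B := card_le_univ _
      _ = a * #Qᶜ + a * #Q := by rw [hcard, ← mul_add, card_compl_add_card]
  exact Nat.le_of_add_le_add_left key

theorem stmt_18_general {A B : Type*} [Fintype A] [Fintype B] [DecidableEq A]
    [DecidableEq B] (hat : A → Finset B) (a : ℕ)
    (hcover : ∀ b : B, ∃ q : A, b ∈ hat q)
    (hHall : ∀ S : Finset A, S.Nonempty → S ≠ Finset.univ →
      a * S.card ≤ (S.biUnion hat).card)
    (hcard : Fintype.card B = a * Fintype.card A) :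
    ∃ f : B → A, (∀ b, b ∈ hat (f b)) ∧
      ∀ q : A, (Finset.univ.filter fun b => f b = q).card = a := by
  obtain ⟨f, hf, hfiber⟩ := Fintype.exists_fiber_card_le_of_card_le_mul_filter_rel
    (fun b q => b ∈ hat q) a (card_le_mul_card_filter_mem_of_hall hat a hcover hHall hcard)
  exact ⟨f, hf, Fintype.fiber_card_eq_of_fiber_card_le hfiber hcard⟩

/-- **Star decomposition via enlargements.** Let `A` be a finite family (index
type) of cubes with enlargements `hat q ⊆ B` (`hat q ⊇ q`, and every element of
the finite set `B` lies in some enlargement), let `a ≥ 1`, and suppose that for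
every nonempty proper subfamily `S ⊊ A` we have `a·|S| ≤ |⋃_{q ∈ S} hat q|`,
and `|B| = a·|A|`. Then in the bipartite graph `Γ` where `q ∈ A` is adjacent to
`v ∈ B` iff `v ∈ hat q`, the vertices can be partitioned into `|A|` disjoint
`a`-stars with centers in `A` (encoded by `f : B → A` with `b ∈ hat (f b)` and
all fibers of size `a`). -/
theorem stmt_18 {A B : Type*} [Fintype A] [Fintype B] [DecidableEq A]
    [DecidableEq B] (hat : A → Finset B) (a : ℕ) (ha : 0 < a)
    (hcover : ∀ b : B, ∃ q : A, b ∈ hat q)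
    (hHall : ∀ S : Finset A, S.Nonempty → S ≠ Finset.univ →
      a * S.card ≤ (S.biUnion hat).card)
    (hcard : Fintype.card B = a * Fintype.card A) :
    ∃ f : B → A, (∀ b, b ∈ hat (f b)) ∧
      ∀ q : A, (Finset.univ.filter fun b => f b = q).card = a :=
  stmt_18_general hat a hcover hHall hcard
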